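/- An edge-weighted graph G=(V,E) with positive integer edge weights admits a (k,r)-center if and only if it admits a valid distance labeling dl: V → {0,1,…,r} of cost k. -/
import Mathlib


/-- The total weight of a walk in an edge-weighted graph. -/
def wWeight {V : Type*} (G : SimpleGraph V) (w : V → V → ℕ) {a b : V} (p : G.Walk a b) : ℕ :=
  (p.darts.map fun d => w d.toProd.1 d.toProd.2).sum

lemma wWeight_nil {V : Type*} (G : SimpleGraph V) (w : V → V → ℕ) (a : V) :
    wWeight G w (SimpleGraph.Walk.nil : G.Walk a a) = 0 := rfl

lemma wWeight_cons {V : Type*} (G : SimpleGraph V) (w : V → V → ℕ) {a b c : V}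
    (h : G.Adj a b) (p : G.Walk b c) :
    wWeight G w (SimpleGraph.Walk.cons h p) = w a b + wWeight G w p := by
  simp [wWeight, SimpleGraph.Walk.darts_cons]

lemma wWeight_concat {V : Type*} (G : SimpleGraph V) (w : V → V → ℕ) {a b c : V}
    (p : G.Walk a b) (h : G.Adj b c) :
    wWeight G w (p.concat h) = wWeight G w p + w b c := by
  simp [wWeight, SimpleGraph.Walk.darts_concat]

lemma eq_of_wWeight_zero {V : Type*} {G : SimpleGraph V} {w : V → V → ℕ}
    (hpos : ∀ x y : V, G.Adj x y → 0 < w x y) {a b : V} (p : G.Walk a b)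
    (h : wWeight G w p = 0) : a = b := by
  cases p with
  | nil => rfl
  | cons hadj q =>
    rw [wWeight_cons] at h
    have := hpos _ _ hadj
    omega

/-- An edge-weighted graph with positive integer weights admits a `(k,r)`-center (a set `K` of
`k` vertices with every vertex at weighted distance at most `r` from `K`) if and only if it
admits a valid distance labeling `dl : V → {0,…,r}` of cost `k`, i.e. a labeling such that every
vertex `u` with `dl u ≠ 0` has a neighbor `v` with `dl v + w (v,u) ≤ dl u`, and with exactly
`k` vertices labeled `0`. -/
theorem stmt11 {V : Type*} [Fintype V] (G : SimpleGraph V) (w : V → V → ℕ)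
    (hsymm : ∀ x y : V, w x y = w y x) (hpos : ∀ x y : V, G.Adj x y → 0 < w x y)
    (k r : ℕ) (hk : 1 ≤ k) (hr : 1 ≤ r) :
    (∃ K : Finset V, K.card = k ∧
        ∀ u : V, ∃ v ∈ K, ∃ p : G.Walk v u, wWeight G w p ≤ r) ↔
    (∃ dl : V → ℕ, (∀ u : V, dl u ≤ r) ∧
        (∀ u : V, dl u ≠ 0 → ∃ v : V, G.Adj v u ∧ dl v + w v u ≤ dl u) ∧
        (Finset.univ.filter fun u => dl u = 0).card = k) := by
  constructor
  · rintro ⟨K, hKcard, hK⟩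
    set S : V → Set ℕ := fun u => {n | ∃ v ∈ K, ∃ p : G.Walk v u, wWeight G w p = n} with hS
    have hne : ∀ u, (S u).Nonempty := by
      intro u
      obtain ⟨v, hv, p, hp⟩ := hK u
      exact ⟨wWeight G w p, v, hv, p, rfl⟩
    refine ⟨fun u => sInf (S u), ?_, ?_, ?_⟩
    · intro u
      obtain ⟨v, hv, p, hp⟩ := hK u
      exact le_trans (Nat.sInf_le ⟨v, hv, p, rfl⟩) hp
    · intro u hu
      dsimp only at hu ⊢
      obtain ⟨v, hv, p, hp⟩ := Nat.sInf_mem (hne u)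
      -- p is non-nil since its weight is nonzero
      cases p with
      | nil => exact absurd hp.symm hu
      | cons hadj q =>
        obtain ⟨x, q', h', heq⟩ := SimpleGraph.Walk.exists_cons_eq_concat hadj q
        rw [heq, wWeight_concat] at hp
        refine ⟨x, h', ?_⟩
        have hx : sInf (S x) ≤ wWeight G w q' := Nat.sInf_le ⟨v, hv, q', rfl⟩
        omega
    · rw [← hKcard]
      congr 1
      ext u
      simp only [Finset.mem_filter, Finset.mem_univ, true_and]
      constructor
      · intro h
        obtain ⟨v, hv, p, hp⟩ := Nat.sInf_mem (hne u)
        rw [h] at hp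
        exact (eq_of_wWeight_zero hpos p hp) ▸ hv
      · intro hu
        exact Nat.le_antisymm (Nat.sInf_le ⟨u, hu, SimpleGraph.Walk.nil, rfl⟩) (Nat.zero_le _)
  · rintro ⟨dl, hle, hstep, hcard⟩
    refine ⟨Finset.univ.filter fun u => dl u = 0, hcard, ?_⟩
    have key : ∀ n : ℕ, ∀ u : V, dl u = n →
        ∃ v ∈ Finset.univ.filter fun u => dl u = 0, ∃ p : G.Walk v u, wWeight G w p ≤ n := by
      intro n
      induction n using Nat.strong_induction_on with
      | _ n ih =>
        intro u hu
        by_cases h0 : dl u = 0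
        · exact ⟨u, by simp [h0], SimpleGraph.Walk.nil, by simp [wWeight_nil]⟩
        · obtain ⟨v, hadj, hv⟩ := hstep u h0
          have hwpos := hpos _ _ hadj
          have hlt : dl v < n := by omega
          obtain ⟨v₀, hv₀, p, hp⟩ := ih (dl v) hlt v rfl
          refine ⟨v₀, hv₀, p.concat hadj, ?_⟩
          rw [wWeight_concat]
          omega
    intro u
    obtain ⟨v, hv, p, hp⟩ := key (dl u) u rfl
    exact ⟨v, hv, p, le_trans hp (hle u)⟩
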